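/- For every modal rule θ ∈ {λ, J} and all modal trees T, S: if T rewrites to S by one θ-step followed by one π⁺-step, then T rewrites to S by finitely many (possibly zero) π⁺-steps, followed by finitely many (possibly zero) θ-steps, followed by finitely many (possibly zero) σ-steps. -/

import Mathlib

namespace TRC

/-- Strictly positive formulas of `L⁺`. -/
inductive SPF : Type where
  | top : SPF
  | var : ℕ → SPF
  | dia : ℕ → SPF → SPF
  | and : SPF → SPF → SPF

/-- The sequent system `K⁺`. -/
inductive KPlus : SPF → SPF → Prop where
  | id (φ) : KPlus φ φ
  | topI (φ) : KPlus φ .top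
  | cut {φ ψ χ} : KPlus φ ψ → KPlus ψ χ → KPlus φ χ
  | andE₁ (φ ψ) : KPlus (.and φ ψ) φ
  | andE₂ (φ ψ) : KPlus (.and φ ψ) ψ
  | andI {φ ψ χ} : KPlus φ ψ → KPlus φ χ → KPlus φ (.and ψ χ)
  | dist {φ ψ} (α) : KPlus φ ψ → KPlus (.dia α φ) (.dia α ψ)

/-- The Reflection Calculus `RC`. -/
inductive RC : SPF → SPF → Prop where
  | id (φ) : RC φ φ
  | topI (φ) : RC φ .top
  | cut {φ ψ χ} : RC φ ψ → RC ψ χ → RC φ χ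
  | andE₁ (φ ψ) : RC (.and φ ψ) φ
  | andE₂ (φ ψ) : RC (.and φ ψ) ψ
  | andI {φ ψ χ} : RC φ ψ → RC φ χ → RC φ (.and ψ χ)
  | dist {φ ψ} (α) : RC φ ψ → RC (.dia α φ) (.dia α ψ)
  | trans (α φ) : RC (.dia α (.dia α φ)) (.dia α φ)
  | mono {α β} (φ) : β < α → RC (.dia α φ) (.dia β φ)
  | jax {α β} (φ ψ) : β < α → RC (.and (.dia α φ) (.dia β ψ)) (.dia α (.and φ (.dia β ψ)))

/-- Modal depth. -/
def SPF.md : SPF → ℕ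
  | .top => 0
  | .var _ => 0
  | .dia _ φ => φ.md + 1
  | .and φ ψ => max φ.md ψ.md

/-- Modal trees. -/
inductive MTree : Type where
  | node : List ℕ → List (ℕ × MTree) → MTree

/-- Sum of modal trees. -/
def MTree.sum : MTree → MTree → MTree
  | .node Δ₁ Γ₁, .node Δ₂ Γ₂ => .node (Δ₁ ++ Δ₂) (Γ₁ ++ Γ₂)

mutual
/-- Height of a modal tree. -/
def MTree.height : MTree → ℕ
  | .node _ Γ => heightL Γ
def heightL : List (ℕ × MTree) → ℕ
  | [] => 0
  | (_, S) :: Γ => max (S.height + 1) (heightL Γ)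
end

mutual
/-- `T.IsPos k`: the (1-indexed) string `k` is a position of `T`. -/
def MTree.IsPos : MTree → List ℕ → Prop
  | _, [] => True
  | .node _ Γ, i :: k => isPosL Γ i k
def isPosL : List (ℕ × MTree) → ℕ → List ℕ → Prop
  | [], _, _ => False
  | _ :: _, 0, _ => False
  | (_, S) :: _, 1, k => S.IsPos k
  | _ :: Γ, n+2, k => isPosL Γ (n+1) k
end

mutual
/-- Subtree of `T` at position `k` (returning a default junk value off positions). -/
def MTree.subtree : MTree → List ℕ → MTree
  | T, [] => T
  | .node Δ Γ, i :: k => subtreeL (.node Δ Γ) Γ i k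
def subtreeL : MTree → List (ℕ × MTree) → ℕ → List ℕ → MTree
  | d, [], _, _ => d
  | d, _ :: _, 0, _ => d
  | _, (_, S) :: _, 1, k => S.subtree k
  | d, _ :: Γ, n+2, k => subtreeL d Γ (n+1) k
end

mutual
/-- `T.replace S k`: replace the subtree of `T` at position `k` by `S`. -/
def MTree.replace : MTree → MTree → List ℕ → MTree
  | _, S, [] => S
  | .node Δ Γ, S, i :: k => .node Δ (replaceL Γ S i k)
def replaceL : List (ℕ × MTree) → MTree → ℕ → List ℕ → List (ℕ × MTree)
  | [], _, _, _ => []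
  | Γ, _, 0, _ => Γ
  | (α, C) :: Γ, S, 1, k => (α, C.replace S k) :: Γ
  | x :: Γ, S, n+2, k => x :: replaceL Γ S (n+1) k
end

/-- Names of the eight rewriting rules of TRC. -/
inductive Rule : Type where
  | rhoP | rhoM | sigma | piP | piM | four | lam | jay
  deriving DecidableEq

/-- One rewriting step performed at the root. -/
inductive RootStep : Rule → MTree → MTree → Prop where
  | rhoP {Δ Γ i p} (hi : 1 ≤ i) (h : Δ[i-1]? = some p) :
      RootStep .rhoP (.node Δ Γ) (.node (p :: Δ) Γ)
  | rhoM {Δ Γ i} (hi : 1 ≤ i) (h : i - 1 < Δ.length) :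
      RootStep .rhoM (.node Δ Γ) (.node (Δ.eraseIdx (i-1)) Γ)
  | sigma {Δ Γ i j x y} (hi : 1 ≤ i) (hj : 1 ≤ j) (hij : i ≠ j)
      (hx : Γ[i-1]? = some x) (hy : Γ[j-1]? = some y) :
      RootStep .sigma (.node Δ Γ) (.node Δ ((Γ.set (j-1) x).set (i-1) y))
  | piP {Δ Γ i x} (hi : 1 ≤ i) (hx : Γ[i-1]? = some x) :
      RootStep .piP (.node Δ Γ) (.node Δ (x :: Γ))
  | piM {Δ Γ i} (hi : 1 ≤ i) (h : i - 1 < Γ.length) :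
      RootStep .piM (.node Δ Γ) (.node Δ (Γ.eraseIdx (i-1)))
  | four {Δ Γ i j β Δt Γt S} (hi : 1 ≤ i) (hj : 1 ≤ j)
      (hΓ : Γ[i-1]? = some (β, MTree.node Δt Γt)) (hΓt : Γt[j-1]? = some (β, S)) :
      RootStep .four (.node Δ Γ) (.node Δ (Γ.set (i-1) (β, S)))
  | lam {Δ Γ i α β S} (hi : 1 ≤ i) (hβ : β < α) (hΓ : Γ[i-1]? = some (α, S)) :
      RootStep .lam (.node Δ Γ) (.node Δ (Γ.set (i-1) (β, S)))
  | jay {Δ Γ i j α β Δt Γt S} (hi : 1 ≤ i) (hj : 1 ≤ j) (hij : i ≠ j) (hβ : β < α)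
      (hΓi : Γ[i-1]? = some (α, MTree.node Δt Γt)) (hΓj : Γ[j-1]? = some (β, S)) :
      RootStep .jay (.node Δ Γ)
        (.node Δ ((Γ.set (i-1) (α, MTree.node Δt (Γt ++ [(β, S)]))).eraseIdx (j-1)))

/-- One step of the rule `r`, applied at some position. -/
def StepR (r : Rule) (T T' : MTree) : Prop :=
  ∃ k S, T.IsPos k ∧ RootStep r (T.subtree k) S ∧ T' = T.replace S k

/-- One step of the rewriting relation `↪`. -/
def Step (T T' : MTree) : Prop := ∃ r, StepR r T T'

/-- The rewriting relation `↪*`. -/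
def Steps : MTree → MTree → Prop := Relation.ReflTransGen Step

/-- TRC-equivalence `↔*`. -/
def TEquiv (T T' : MTree) : Prop := Steps T T' ∧ Steps T' T

/-- `T ↪^Ω S` : rewriting applying the rules of `Ω` in order, one step each. -/
inductive StepsOf : List Rule → MTree → MTree → Prop where
  | nil (T) : StepsOf [] T T
  | cons {r Ω T U S} : StepR r T U → StepsOf Ω U S → StepsOf (r :: Ω) T S

def AtomicStep (T S : MTree) : Prop := StepR .rhoP T S ∨ StepR .rhoM T S
def DecreasingStep (T S : MTree) : Prop := StepR .piM T S ∨ StepR .four T S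
def ModalStep (T S : MTree) : Prop := StepR .lam T S ∨ StepR .jay T S

/-- Finite conjunctions (empty conjunction is `⊤`). -/
def bigAnd : List SPF → SPF
  | [] => .top
  | φ :: l => .and φ (bigAnd l)

mutual
/-- The embedding `ℱ` of modal trees into formulas. -/
def MTree.toFormula : MTree → SPF
  | .node Δ Γ => .and (bigAnd (Δ.map SPF.var)) (diamL Γ)
def diamL : List (ℕ × MTree) → SPF
  | [] => .top
  | (α, S) :: Γ => .and (.dia α S.toFormula) (diamL Γ)
end

/-- The embedding `𝒯` of formulas into modal trees. -/
def SPF.toTree : SPF → MTree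
  | .top => .node [] []
  | .var p => .node [p] []
  | .dia α φ => .node [] [(α, φ.toTree)]
  | .and φ ψ => φ.toTree.sum ψ.toTree

/-- Nonempty conjunction `φ₁ ∧ (φ₂ ∧ (… ∧ φₙ))`. -/
def conjNE : SPF → List SPF → SPF
  | φ, [] => φ
  | φ, ψ :: l => .and φ (conjNE ψ l)

end TRC

/-!
Induct on the position of the `θ`-step. Below the root, `θ` rewrites one child `y` of a node
into `y'`: a `π⁺`-step inside another child commutes with it, one inside `y'` is handled by
induction, and one duplicating `y'` is simulated by duplicating `y` and rewriting both copies.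
At the root, `λ` is such a child rewrite as well. For `J`, which erases the child `(β, S)` and
appends it to the children of `(α, ⟨Δ̃; Γ̃⟩)`, the same reorderings work, except when `π⁺`
duplicates the appended copy of `(β, S)`: then duplicate `(β, S)` beforehand, move the copy in by
a second `J`-step, and restore the order of the children of `⟨Δ̃; Γ̃ ⌢ (β, S) ⌢ (β, S)⟩` by
`σ`-steps, the only place where these are needed.
-/

namespace List

theorem exists_set_eraseIdx {α : Type*} (l : List α) (i j : ℕ) :
    ∃ j', j' ≠ i ∧ (l.eraseIdx i)[j]? = l[j']? ∧
      ∀ a, (l.eraseIdx i).set j a = (l.set j' a).eraseIdx i := by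
  by_cases hij : i ≤ j
  · exact ⟨j + 1, by omega, by simp [getElem?_eraseIdx, Nat.not_lt.2 hij],
      fun a => set_eraseIdx_le hij⟩
  · exact ⟨j, by omega, by simp [getElem?_eraseIdx, Nat.lt_of_not_le hij],
      fun a => set_eraseIdx_gt (Nat.lt_of_not_le hij)⟩

end List

namespace TRC

open Relation (ReflTransGen)

theorem exists_of_isPos_cons {Δ : List ℕ} {Γ : List (ℕ × MTree)} {i : ℕ} {k : List ℕ}
    (h : (MTree.node Δ Γ).IsPos (i :: k)) :
    ∃ n α C, i = n + 1 ∧ Γ[n]? = some (α, C) ∧ C.IsPos k := by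
  simp only [MTree.IsPos] at h
  induction Γ generalizing i with
  | nil => simp [isPosL] at h
  | cons x Γ ih =>
    obtain ⟨α, C⟩ := x
    match i, h with
    | 1, h => exact ⟨0, α, C, rfl, rfl, h⟩
    | n + 2, h =>
      obtain ⟨m, α', C', hm, hg, hp⟩ := ih h
      exact ⟨m + 1, α', C', by omega, by simpa using hg, hp⟩

theorem isPos_cons_of_getElem? {Δ : List ℕ} {Γ : List (ℕ × MTree)} {n α : ℕ} {C : MTree}
    {k : List ℕ} (hg : Γ[n]? = some (α, C)) (h : C.IsPos k) :
    (MTree.node Δ Γ).IsPos ((n + 1) :: k) := by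
  simp only [MTree.IsPos]
  induction Γ generalizing n with
  | nil => simp at hg
  | cons x Γ ih =>
    cases n with
    | zero => obtain rfl := Option.some.inj hg; exact h
    | succ n => exact ih hg

theorem subtree_cons_of_getElem? {Δ : List ℕ} {Γ : List (ℕ × MTree)} {n α : ℕ} {C : MTree}
    (hg : Γ[n]? = some (α, C)) (k : List ℕ) :
    (MTree.node Δ Γ).subtree ((n + 1) :: k) = C.subtree k := by
  simp only [MTree.subtree]
  generalize MTree.node Δ Γ = d
  induction Γ generalizing n with
  | nil => simp at hg
  | cons x Γ ih =>
    cases n with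
    | zero => obtain rfl := Option.some.inj hg; simp [subtreeL]
    | succ n => simpa [subtreeL] using ih hg

theorem replace_cons_of_getElem? {Δ : List ℕ} {Γ : List (ℕ × MTree)} {n α : ℕ} {C : MTree}
    (hg : Γ[n]? = some (α, C)) (S : MTree) (k : List ℕ) :
    (MTree.node Δ Γ).replace S ((n + 1) :: k) = .node Δ (Γ.set n (α, C.replace S k)) := by
  simp only [MTree.replace, MTree.node.injEq, true_and]
  induction Γ generalizing n with
  | nil => simp at hg
  | cons x Γ ih =>
    cases n with
    | zero => obtain rfl := Option.some.inj hg; simp [replaceL]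
    | succ n => simpa [replaceL] using ih hg

theorem StepR.of_rootStep {r : Rule} {T T' : MTree} (h : RootStep r T T') : StepR r T T' :=
  ⟨[], T', by simp [MTree.IsPos], by simpa [MTree.subtree] using h, by simp [MTree.replace]⟩

theorem StepR.node_set {r : Rule} {Δ : List ℕ} {Γ : List (ℕ × MTree)} {n α : ℕ} {C C' : MTree}
    (hg : Γ[n]? = some (α, C)) (h : StepR r C C') :
    StepR r (.node Δ Γ) (.node Δ (Γ.set n (α, C'))) := by
  obtain ⟨k, S, hp, hr, rfl⟩ := h
  exact ⟨(n + 1) :: k, S, isPos_cons_of_getElem? hg hp,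
    by rwa [subtree_cons_of_getElem? hg], (replace_cons_of_getElem? hg S k).symm⟩

theorem StepR.node_cases {r : Rule} {Δ : List ℕ} {Γ : List (ℕ × MTree)} {T' : MTree}
    (h : StepR r (.node Δ Γ) T') :
    RootStep r (.node Δ Γ) T' ∨ ∃ n α C C', Γ[n]? = some (α, C) ∧ StepR r C C' ∧
      T' = .node Δ (Γ.set n (α, C')) := by
  obtain ⟨_ | ⟨i, k⟩, S, hp, hr, rfl⟩ := h
  · exact .inl hr
  · obtain ⟨n, α, C, rfl, hg, hpC⟩ := exists_of_isPos_cons hp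
    rw [subtree_cons_of_getElem? hg] at hr
    exact .inr ⟨n, α, C, _, hg, ⟨k, S, hpC, hr, rfl⟩, replace_cons_of_getElem? hg S k⟩

theorem StepR.induction {r : Rule} {motive : MTree → MTree → Prop}
    (root : ∀ {T T'}, RootStep r T T' → motive T T')
    (child : ∀ {Δ Γ n α C C'}, Γ[n]? = some (α, C) → StepR r C C' → motive C C' →
      motive (.node Δ Γ) (.node Δ (Γ.set n (α, C'))))
    {T T' : MTree} (h : StepR r T T') : motive T T' := by
  obtain ⟨k, S, hp, hr, rfl⟩ := h
  induction k generalizing T with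
  | nil => simpa [MTree.subtree, MTree.replace] using root hr
  | cons i k ih =>
    obtain ⟨Δ, Γ⟩ := T
    obtain ⟨n, α, C, rfl, hg, hpC⟩ := exists_of_isPos_cons hp
    rw [subtree_cons_of_getElem? hg] at hr
    rw [replace_cons_of_getElem? hg]
    exact child hg ⟨k, S, hpC, hr, rfl⟩ (ih hpC hr)

theorem reflTransGen_stepR_node_set {r : Rule} {Δ : List ℕ} {Γ : List (ℕ × MTree)} {n α : ℕ}
    {C C' : MTree} (hn : n < Γ.length) (h : ReflTransGen (StepR r) C C') :
    ReflTransGen (StepR r) (.node Δ (Γ.set n (α, C))) (.node Δ (Γ.set n (α, C'))) :=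
  h.lift _ fun A B hAB => by
    simpa using StepR.node_set (Δ := Δ) (List.getElem?_set_self (a := (α, A)) hn) hAB

theorem RootStep.exists_mem_of_piP {Δ : List ℕ} {Γ : List (ℕ × MTree)} {T' : MTree}
    (h : RootStep .piP (.node Δ Γ) T') : ∃ x ∈ Γ, T' = .node Δ (x :: Γ) := by
  cases h with
  | piP _ hx => exact ⟨_, List.mem_of_getElem? hx, rfl⟩

theorem stepR_piP_of_mem {Δ : List ℕ} {Γ : List (ℕ × MTree)} {x : ℕ × MTree} (hx : x ∈ Γ) :
    StepR .piP (.node Δ Γ) (.node Δ (x :: Γ)) := by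
  obtain ⟨p, hp⟩ := List.mem_iff_getElem?.1 hx
  exact .of_rootStep (.piP (i := p + 1) (by omega) hp)

theorem stepR_lam {Δ : List ℕ} {Γ : List (ℕ × MTree)} {n α β : ℕ} {C : MTree} (hβ : β < α)
    (hg : Γ[n]? = some (α, C)) : StepR .lam (.node Δ Γ) (.node Δ (Γ.set n (β, C))) :=
  .of_rootStep (.lam (i := n + 1) (by omega) hβ hg)

theorem stepR_jay {Δ Δt : List ℕ} {Γ Γt : List (ℕ × MTree)} {n e α β : ℕ} {S : MTree}
    (hne : n ≠ e) (hβ : β < α) (hn : Γ[n]? = some (α, .node Δt Γt))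
    (he : Γ[e]? = some (β, S)) :
    StepR .jay (.node Δ Γ)
      (.node Δ ((Γ.set n (α, .node Δt (Γt ++ [(β, S)]))).eraseIdx e)) :=
  .of_rootStep (.jay (i := n + 1) (j := e + 1) (by omega) (by omega) (by omega) hβ hn he)

theorem stepR_sigma_swap {Δ : List ℕ} (P Q : List (ℕ × MTree)) (a b : ℕ × MTree) :
    StepR .sigma (.node Δ (P ++ a :: b :: Q)) (.node Δ (P ++ b :: a :: Q)) := by
  have h := RootStep.sigma (Δ := Δ) (Γ := P ++ a :: b :: Q) (i := P.length + 1)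
    (j := P.length + 2) (x := a) (y := b) (by omega) (by omega) (by omega) (by simp) (by simp)
  simpa [List.set_append_right] using StepR.of_rootStep h

theorem reflTransGen_stepR_sigma_rotate {Δ : List ℕ} (L Q : List (ℕ × MTree))
    (x : ℕ × MTree) :
    ReflTransGen (StepR .sigma) (.node Δ (L ++ x :: Q)) (.node Δ (x :: L ++ Q)) := by
  induction L using List.reverseRecOn generalizing Q with
  | nil => exact .refl
  | append_singleton L y ih =>
    simpa using (ReflTransGen.single (stepR_sigma_swap L Q y x)).trans (ih (y :: Q))

/-- `T ↪^{π⁺* θ* σ*} S`. -/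
def PiPThetaSigma (θ : Rule) (T S : MTree) : Prop :=
  ∃ U V, ReflTransGen (StepR .piP) T U ∧ ReflTransGen (StepR θ) U V ∧
    ReflTransGen (StepR .sigma) V S

theorem PiPThetaSigma.node_set {θ : Rule} {Δ : List ℕ} {Γ : List (ℕ × MTree)} {n α : ℕ}
    {C C' : MTree} (hg : Γ[n]? = some (α, C)) (h : PiPThetaSigma θ C C') :
    PiPThetaSigma θ (.node Δ Γ) (.node Δ (Γ.set n (α, C'))) := by
  obtain ⟨U, V, hU, hV, hS⟩ := h
  obtain ⟨hn, hC⟩ := List.getElem?_eq_some_iff.1 hg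
  have hΓ : Γ.set n (α, C) = Γ := by rw [← hC, List.set_getElem_self]
  refine ⟨_, _, ?_, reflTransGen_stepR_node_set hn hV, reflTransGen_stepR_node_set hn hS⟩
  simpa [hΓ] using reflTransGen_stepR_node_set (Δ := Δ) (α := α) hn hU

def ChildStep (θ : Rule) (y y' : ℕ × MTree) : Prop :=
  ∀ Δ Γ n, Γ[n]? = some y → StepR θ (.node Δ Γ) (.node Δ (Γ.set n y'))

theorem childStep_lam {α β : ℕ} (hβ : β < α) (C : MTree) : ChildStep .lam (α, C) (β, C) :=
  fun _ _ _ => stepR_lam hβ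

theorem StepR.childStep {θ : Rule} {C C' : MTree} (h : StepR θ C C') (α : ℕ) :
    ChildStep θ (α, C) (α, C') :=
  fun _ _ _ hg => h.node_set hg

theorem ChildStep.piPThetaSigma {θ : Rule} {y y' : ℕ × MTree} (hstep : ChildStep θ y y')
    {Δ : List ℕ} {Γ : List (ℕ × MTree)} {n : ℕ} {S : MTree} (hn : Γ[n]? = some y)
    (hin : ∀ D', StepR .piP y'.2 D' →
      PiPThetaSigma θ (.node Δ Γ) (.node Δ (Γ.set n (y'.1, D'))))
    (h : StepR .piP (.node Δ (Γ.set n y')) S) : PiPThetaSigma θ (.node Δ Γ) S := by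
  have hlen : n < Γ.length := (List.getElem?_eq_some_iff.1 hn).1
  rcases h.node_cases with hroot | ⟨q, γ, D, D', hq, hD, rfl⟩
  · obtain ⟨x, hx, rfl⟩ := hroot.exists_mem_of_piP
    rcases List.mem_or_eq_of_mem_set hx with hx | rfl
    · refine ⟨_, _, .single (stepR_piP_of_mem hx), .single ?_, .refl⟩
      simpa using hstep Δ (x :: Γ) (n + 1) (by simpa using hn)
    · have h₀ : StepR θ (.node Δ (y :: Γ)) (.node Δ (x :: Γ)) := by
        simpa using hstep Δ (y :: Γ) 0 rfl
      have h₁ : StepR θ (.node Δ (x :: Γ)) (.node Δ (x :: Γ.set n x)) := by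
        simpa using hstep Δ (x :: Γ) (n + 1) (by simpa using hn)
      exact ⟨_, _, .single (stepR_piP_of_mem (List.mem_of_getElem? hn)),
        .head h₀ (.single h₁), .refl⟩
  · by_cases hqn : q = n
    · subst hqn
      obtain rfl : y' = (γ, D) := by simpa [hlen] using hq
      simpa using hin D' hD
    · rw [List.getElem?_set_ne (Ne.symm hqn)] at hq
      refine ⟨_, _, .single (hD.node_set hq), .single ?_, .refl⟩
      rw [List.set_comm _ _ (Ne.symm hqn)]
      exact hstep Δ _ n (by rwa [List.getElem?_set_ne hqn])

theorem RootStep.lam_piPThetaSigma {T U S : MTree} (h : RootStep .lam T U)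
    (hS : StepR .piP U S) : PiPThetaSigma .lam T S := by
  cases h with
  | lam _ hβ hg =>
    refine (childStep_lam hβ _).piPThetaSigma hg (fun D' hD => ?_) hS
    have hlen := (List.getElem?_eq_some_iff.1 hg).1
    refine ⟨_, _, .single (hD.node_set hg), .single ?_, .refl⟩
    simpa using stepR_lam hβ (List.getElem?_set_self (a := (_, D')) hlen)

theorem reflTransGen_stepR_node_set_eraseIdx {r : Rule} {Δ : List ℕ} {Γ : List (ℕ × MTree)}
    {n e α : ℕ} {C C' : MTree} (hne : n ≠ e) (hn : n < Γ.length)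
    (h : ReflTransGen (StepR r) C C') :
    ReflTransGen (StepR r) (.node Δ ((Γ.set n (α, C)).eraseIdx e))
      (.node Δ ((Γ.set n (α, C')).eraseIdx e)) := by
  simp only [List.eraseIdx_set, if_neg (Ne.symm hne)]
  split_ifs <;> exact reflTransGen_stepR_node_set
    (by simp only [List.length_eraseIdx]; split_ifs <;> omega) h

theorem stepR_piP_append_singleton_cases {Δ : List ℕ} {Γ : List (ℕ × MTree)}
    {z : ℕ × MTree} {D : MTree} (h : StepR .piP (.node Δ (Γ ++ [z])) D) :
    (∃ Γ', StepR .piP (.node Δ Γ) (.node Δ Γ') ∧ D = .node Δ (Γ' ++ [z])) ∨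
      D = .node Δ (z :: (Γ ++ [z])) ∨
      ∃ C', StepR .piP z.2 C' ∧ D = .node Δ (Γ ++ [(z.1, C')]) := by
  rcases h.node_cases with hroot | ⟨w, γ, C, C', hw, hC, rfl⟩
  · obtain ⟨x, hx, rfl⟩ := hroot.exists_mem_of_piP
    rcases List.mem_append.1 hx with hx | hx
    · exact .inl ⟨_, stepR_piP_of_mem hx, rfl⟩
    · obtain rfl := List.mem_singleton.1 hx
      exact .inr (.inl rfl)
  · by_cases hwΓ : w < Γ.length
    · rw [List.getElem?_append_left hwΓ] at hw
      exact .inl ⟨_, hC.node_set hw, by rw [List.set_append_left _ _ hwΓ]⟩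
    · have hwΓ' : w = Γ.length := by
        have := (List.getElem?_eq_some_iff.1 hw).1
        simp only [List.length_append, List.length_singleton] at this
        omega
      subst hwΓ'
      obtain rfl : z = (γ, C) := by simpa using hw
      exact .inr (.inr ⟨C', hC, by simp⟩)

section Jay

variable {Δ Δt : List ℕ} {Γ Γt : List (ℕ × MTree)} {n e α β : ℕ} {S : MTree}

theorem jay_piPThetaSigma_dup (hne : n ≠ e) (hβ : β < α) (hn : Γ[n]? = some (α, .node Δt Γt))
    (he : Γ[e]? = some (β, S)) {x : ℕ × MTree}
    (hx : x ∈ (Γ.set n (α, .node Δt (Γt ++ [(β, S)]))).eraseIdx e) :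
    PiPThetaSigma .jay (.node Δ Γ)
      (.node Δ (x :: (Γ.set n (α, .node Δt (Γt ++ [(β, S)]))).eraseIdx e)) := by
  have jay_cons : ∀ y, StepR .jay (.node Δ (y :: Γ))
      (.node Δ (y :: (Γ.set n (α, .node Δt (Γt ++ [(β, S)]))).eraseIdx e)) := fun y => by
    simpa using stepR_jay (Γ := y :: Γ) (n := n + 1) (e := e + 1) (by omega) hβ
      (by simpa using hn) (by simpa using he)
  rcases List.mem_or_eq_of_mem_set (List.mem_of_mem_eraseIdx hx) with hx | rfl
  · exact ⟨_, _, .single (stepR_piP_of_mem hx), .single (jay_cons x), .refl⟩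
  · -- duplicate both children involved in the `J`-step and apply `J` to the copies too
    have dup₁ := stepR_piP_of_mem (Δ := Δ) (List.mem_of_getElem? he)
    have dup₂ := stepR_piP_of_mem (Δ := Δ) (x := (α, .node Δt Γt))
      (List.mem_cons_of_mem (β, S) (List.mem_of_getElem? hn))
    have jay_copies : StepR .jay (.node Δ ((α, .node Δt Γt) :: (β, S) :: Γ))
        (.node Δ ((α, .node Δt (Γt ++ [(β, S)])) :: Γ)) := by
      simpa using stepR_jay (Δ := Δ) (Γ := (α, .node Δt Γt) :: (β, S) :: Γ) (n := 0) (e := 1)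
        (by omega) hβ rfl rfl
    exact ⟨_, _, .head dup₁ (.single dup₂), .head jay_copies (.single (jay_cons _)), .refl⟩

theorem jay_piPThetaSigma_inside (hne : n ≠ e) (hβ : β < α)
    (hn : Γ[n]? = some (α, .node Δt Γt)) (he : Γ[e]? = some (β, S)) {D : MTree}
    (h : StepR .piP (.node Δt (Γt ++ [(β, S)])) D) :
    PiPThetaSigma .jay (.node Δ Γ) (.node Δ ((Γ.set n (α, D)).eraseIdx e)) := by
  have hlen := (List.getElem?_eq_some_iff.1 hn).1
  rcases stepR_piP_append_singleton_cases h with ⟨Γ', hΓ', rfl⟩ | rfl | ⟨C', hC', rfl⟩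
  · refine ⟨_, _, .single (hΓ'.node_set hn), .single ?_, .refl⟩
    simpa using stepR_jay (Δ := Δ) hne hβ (List.getElem?_set_self hlen)
      (by rwa [List.getElem?_set_ne hne])
  · -- duplicate `(β, S)`, move the copy into the `n`-th child by `J`, rotate it to the front
    have jay_copy : StepR .jay (.node Δ ((β, S) :: Γ))
        (.node Δ (Γ.set n (α, .node Δt (Γt ++ [(β, S)])))) := by
      simpa using stepR_jay (Δ := Δ) (Γ := (β, S) :: Γ) (n := n + 1) (e := 0)
        (by omega) hβ (by simpa using hn) rfl
    have jay_orig := stepR_jay (Δ := Δ) hne hβ (List.getElem?_set_self hlen)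
      (by rwa [List.getElem?_set_ne hne] : (Γ.set n (α, .node Δt (Γt ++ [(β, S)])))[e]? = _)
    have rotate := reflTransGen_stepR_node_set_eraseIdx (Δ := Δ) (α := α) hne hlen
      (reflTransGen_stepR_sigma_rotate (Δ := Δt) (Γt ++ [(β, S)]) [] (β, S))
    refine ⟨_, _, .single (stepR_piP_of_mem (List.mem_of_getElem? he)),
      .head jay_copy (.single ?_), by simpa using rotate⟩
    simpa using jay_orig
  · refine ⟨_, _, .single (hC'.node_set he), .single ?_, .refl⟩
    have := stepR_jay (Δ := Δ) hne hβ (by rwa [List.getElem?_set_ne (Ne.symm hne)])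
      (List.getElem?_set_self (a := (β, C')) (List.getElem?_eq_some_iff.1 he).1)
    rwa [List.set_comm _ _ (Ne.symm hne), List.eraseIdx_set_eq] at this

theorem jay_piPThetaSigma_child (hne : n ≠ e) (hβ : β < α)
    (hn : Γ[n]? = some (α, .node Δt Γt)) (he : Γ[e]? = some (β, S)) {q γ : ℕ} {D D' : MTree}
    (hq : (Γ.set n (α, .node Δt (Γt ++ [(β, S)])))[q]? = some (γ, D)) (hqe : q ≠ e)
    (hD : StepR .piP D D') :
    PiPThetaSigma .jay (.node Δ Γ)
      (.node Δ (((Γ.set n (α, .node Δt (Γt ++ [(β, S)]))).set q (γ, D')).eraseIdx e)) := by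
  by_cases hqn : q = n
  · subst hqn
    obtain ⟨rfl, rfl⟩ : γ = α ∧ D = .node Δt (Γt ++ [(β, S)]) := by
      simpa [(List.getElem?_eq_some_iff.1 hn).1, eq_comm] using hq
    rw [List.set_set]
    exact jay_piPThetaSigma_inside hne hβ hn he hD
  · rw [List.getElem?_set_ne (Ne.symm hqn)] at hq
    refine ⟨_, _, .single (hD.node_set hq), .single ?_, .refl⟩
    rw [List.set_comm _ _ (Ne.symm hqn)]
    exact stepR_jay hne hβ (by rwa [List.getElem?_set_ne hqn]) (by rwa [List.getElem?_set_ne hqe])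

end Jay

theorem RootStep.jay_piPThetaSigma {T U S : MTree} (h : RootStep .jay T U)
    (hS : StepR .piP U S) : PiPThetaSigma .jay T S := by
  cases h with
  | @jay _ _ i j _ _ _ _ _ hi hj hij hβ hn he =>
    have hne : i - 1 ≠ j - 1 := by omega
    rcases hS.node_cases with hroot | ⟨q, γ, D, D', hq, hD, rfl⟩
    · obtain ⟨x, hx, rfl⟩ := hroot.exists_mem_of_piP
      exact jay_piPThetaSigma_dup hne hβ hn he hx
    · obtain ⟨q', hq'e, hq', hset⟩ := List.exists_set_eraseIdx _ _ q
      rw [hset]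
      exact jay_piPThetaSigma_child hne hβ hn he (hq' ▸ hq) hq'e hD

theorem StepR.piPThetaSigma_of_piP {θ : Rule} (hθ : θ = .lam ∨ θ = .jay) {T U S : MTree}
    (h : StepR θ T U) (hS : StepR .piP U S) : PiPThetaSigma θ T S := by
  refine StepR.induction (motive := fun T U => ∀ S, StepR .piP U S → PiPThetaSigma θ T S)
    (fun hr S hS => ?_) (fun hg hC ih S hS => ?_) h S hS
  · rcases hθ with rfl | rfl
    exacts [hr.lam_piPThetaSigma hS, hr.jay_piPThetaSigma hS]
  · exact (hC.childStep _).piPThetaSigma hg (fun D' hD => .node_set hg (ih D' hD)) hS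

end TRC

/-- a modal step (`θ ∈ {λ, J}`) followed by a `π⁺`-step can be
replaced by finitely many `π⁺`-steps, then finitely many `θ`-steps, then
finitely many `σ`-steps. -/
theorem modal_piP_permutation (θ : TRC.Rule) (hθ : θ = TRC.Rule.lam ∨ θ = TRC.Rule.jay)
    (T S : TRC.MTree) (h : ∃ U, TRC.StepR θ T U ∧ TRC.StepR .piP U S) :
    ∃ U V, Relation.ReflTransGen (TRC.StepR .piP) T U ∧
      Relation.ReflTransGen (TRC.StepR θ) U V ∧
      Relation.ReflTransGen (TRC.StepR .sigma) V S := by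
  obtain ⟨U, hθU, hUS⟩ := h
  exact hθU.piPThetaSigma_of_piP hθ hUS
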